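/- Let a_1 = 1 and a_n = a_{n-1} + lcm(n, a_{n-1}) for n ≥ 2, with b_n = n / gcd(n, a_{n-1}). Suppose n ≥ 2 and for every prime p dividing n, the p-adic valuation v_p(n) satisfies v_p(n) ≤ #{q ≤ n−1 : q prime, q ≠ 3, q ≡ −1 (mod p)}, except possibly for one prime p₀ where v_{p₀}(n) exceeds this count by at most 1. Then b_n ∈ {1} ∪ {primes}. -/
import Mathlib


/-- `S_p(m) = #{q ≤ m : q prime, q ≠ 3, q ≡ -1 (mod p)}`. -/
def Sone (p m : ℕ) : ℕ :=
  ((Finset.Iic m).filter (fun q => Nat.Prime q ∧ q ≠ 3 ∧ p ∣ (q + 1))).card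

/-- The guaranteed stock `C m = ∏_{q ≤ m prime, q ≠ 3} (q+1)`. -/
def Cstock (m : ℕ) : ℕ :=
  ∏ q ∈ (Finset.Iic m).filter (fun q => Nat.Prime q ∧ q ≠ 3), (q + 1)

lemma pow_Sone_dvd_Cstock (p m : ℕ) : p ^ Sone p m ∣ Cstock m := by
  classical
  set S := (Finset.Iic m).filter (fun q => Nat.Prime q ∧ q ≠ 3) with hS
  set T := S.filter (fun q => p ∣ (q + 1)) with hT
  have hcard : Sone p m = T.card := by
    rw [hT, hS, Finset.filter_filter]
    unfold Sone
    congr 1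
    apply Finset.filter_congr
    intro q _
    simp [and_assoc]
  rw [hcard, ← Finset.prod_const]
  calc (∏ _q ∈ T, p) ∣ ∏ q ∈ T, (q + 1) :=
        Finset.prod_dvd_prod_of_dvd _ _ (fun q hq => (Finset.mem_filter.mp hq).2)
    _ ∣ Cstock m := Finset.prod_dvd_prod_of_subset _ _ _ (Finset.filter_subset _ _)

lemma Iic_succ_nat (j : ℕ) : Finset.Iic (j + 1) = insert (j + 1) (Finset.Iic j) := by
  ext x; simp; omega

section Seq

variable (a : ℕ → ℕ) (ha1 : a 1 = 1)
  (ha : ∀ n, 2 ≤ n → a n = a (n - 1) + Nat.lcm n (a (n - 1)))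

include ha1 ha

lemma a_pos : ∀ m, 1 ≤ m → 0 < a m := by
  intro m hm
  induction m with
  | zero => omega
  | succ j ih =>
    rcases Nat.eq_or_lt_of_le hm with h | h
    · rw [← h, ha1]; norm_num
    · have hj : 1 ≤ j := by omega
      have h2 := ha (j + 1) (by omega)
      simp only [Nat.add_sub_cancel] at h2
      have := ih hj
      omega

lemma a_step (m : ℕ) (hm : 1 ≤ m) :
    ∃ k, Nat.gcd (m + 1) (a m) * k = m + 1 ∧ a (m + 1) = a m * (k + 1) := by
  have h := ha (m + 1) (by omega)
  simp only [Nat.add_sub_cancel] at h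
  obtain ⟨k, hk⟩ := Nat.gcd_dvd_left (m + 1) (a m)
  have hg : 0 < Nat.gcd (m + 1) (a m) := Nat.gcd_pos_of_pos_left _ (by omega)
  refine ⟨k, hk.symm, ?_⟩
  have hl : Nat.lcm (m + 1) (a m) = k * a m := by
    rw [Nat.lcm]
    nth_rewrite 1 [hk]
    rw [mul_assoc, Nat.mul_div_cancel_left _ hg]
  rw [h, hl]; ring

lemma a2 : a 2 = 3 := by
  have h := ha 2 (by norm_num)
  norm_num [ha1] at h
  exact h

lemma a3 : a 3 = 6 := by
  have h := ha 3 (by norm_num)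
  norm_num [a2 a ha1 ha] at h
  exact h

lemma main_inv : ∀ m, 3 ≤ m →
    (2 ∣ a m ∧ (∀ q, Nat.Prime q → q ∣ a m → q ≤ m) ∧ Cstock m ∣ a m) := by
  intro m hm
  induction m with
  | zero => omega
  | succ j ih =>
    rcases Nat.eq_or_lt_of_le hm with h | h
    · -- base case j + 1 = 3
      have h3 : j + 1 = 3 := h.symm
      rw [h3, a3 a ha1 ha]
      refine ⟨by norm_num, ?_, ?_⟩
      · intro q hq hqd
        have h6 := Nat.le_of_dvd (by norm_num) hqd
        have h2q := hq.two_le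
        interval_cases q <;>
          first
            | omega
            | exact absurd hq (by decide)
            | exact absurd hqd (by decide)
      · have : Cstock 3 = 3 := by decide
        rw [this]; norm_num
    · -- step: j ≥ 3
      have hj : 3 ≤ j := by omega
      obtain ⟨h2, hpr, hC⟩ := ih hj
      obtain ⟨k, hk, hstep⟩ := a_step a ha1 ha j (by omega)
      have hapos : 0 < a j := a_pos a ha1 ha j (by omega)
      set g := Nat.gcd (j + 1) (a j) with hg
      have hgpos : 0 < g := Nat.gcd_pos_of_pos_left _ (by omega)
      have hgle : g ≤ j + 1 := Nat.le_of_dvd (by omega) (Nat.gcd_dvd_left _ _)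
      have hkpos : 0 < k := by
        rcases Nat.eq_zero_or_pos k with h0 | h0
        · subst h0; simp at hk
        · exact h0
      have hprime' : ∀ q, Nat.Prime q → q ∣ a (j + 1) → q ≤ j + 1 := by
        intro q hq hqd
        rw [hstep] at hqd
        rcases (Nat.Prime.dvd_mul hq).mp hqd with hd | hd
        · exact le_trans (hpr q hq hd) (by omega)
        · by_contra hgt
          push_neg at hgt
          have hq1 : q ∣ g * (k + 1) := Dvd.dvd.mul_left hd g
          have hq2 : q ∣ g + (j + 1) := by
            have : g * (k + 1) = g + (j + 1) := by rw [mul_add, mul_one, hk]; ring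
            rwa [this] at hq1
          have hle : g + (j + 1) = q := by
            obtain ⟨c, hc⟩ := hq2
            have hcle : c ≤ 1 := by
              by_contra hcc
              push_neg at hcc
              have h2q : q * 2 ≤ q * c := Nat.mul_le_mul_left q (by omega)
              omega
            interval_cases c <;> omega
          -- g divides q, g < q, so g = 1 and q = j + 2
          have hgdq : g ∣ q := by
            rw [← hle]
            exact Nat.dvd_add (dvd_refl g) (Nat.gcd_dvd_left _ _)
          have hg1 : g = 1 := by
            rcases (Nat.Prime.eq_one_or_self_of_dvd hq g hgdq) with h' | h'
            · exact h'
            · omega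
          have hqval : q = j + 2 := by omega
          -- q = j + 2 ≥ 5 is an odd prime, so j + 1 is even, so 2 ∣ g
          have hodd : Odd q := hq.odd_of_ne_two (by omega)
          obtain ⟨r, hr⟩ := hodd
          have h2j : 2 ∣ j + 1 := by omega
          have : (2 : ℕ) ∣ g := Nat.dvd_gcd h2j h2
          omega
      refine ⟨by rw [hstep]; exact dvd_mul_of_dvd_left h2 _, hprime', ?_⟩
      · -- stock
        by_cases hp : Nat.Prime (j + 1)
        · -- j + 1 is a prime ≥ 4, hence ≥ 5, not 3; g = 1
          have hg1 : g = 1 := by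
            rcases (Nat.Prime.eq_one_or_self_of_dvd hp g (Nat.gcd_dvd_left _ _)) with h' | h'
            · exact h'
            · exfalso
              have : (j + 1) ∣ a j := h' ▸ Nat.gcd_dvd_right (j+1) (a j)
              have := hpr (j + 1) hp this
              omega
          have hkval : k = j + 1 := by
            have hk' := hk
            rw [hg1, one_mul] at hk'
            exact hk'
          have hCsucc : Cstock (j + 1) = (j + 2) * Cstock j := by
            unfold Cstock
            rw [Iic_succ_nat, Finset.filter_insert, if_pos ⟨hp, by omega⟩,
              Finset.prod_insert (by simp)]
          rw [hstep, hCsucc, hkval]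
          rw [mul_comm (a j) _]
          exact Nat.mul_dvd_mul (dvd_refl _) hC
        · have hCsucc : Cstock (j + 1) = Cstock j := by
            unfold Cstock
            rw [Iic_succ_nat, Finset.filter_insert, if_neg (by tauto)]
          rw [hCsucc, hstep]
          exact Dvd.dvd.trans hC (Dvd.intro _ rfl)

end Seq

theorem stmt_19 (a b : ℕ → ℕ) (ha1 : a 1 = 1)
    (ha : ∀ n, 2 ≤ n → a n = a (n - 1) + Nat.lcm n (a (n - 1)))
    (hb : ∀ n, 2 ≤ n → b n = n / Nat.gcd n (a (n - 1)))
    (n : ℕ) (hn : 2 ≤ n)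
    (hdef : ∃ p₀ : ℕ,
      (∀ p, Nat.Prime p → p ∣ n → p ≠ p₀ → n.factorization p ≤ Sone p (n - 1)) ∧
      n.factorization p₀ ≤ Sone p₀ (n - 1) + 1) :
    b n = 1 ∨ Nat.Prime (b n) := by
  rcases eq_or_ne n 2 with h2 | h2
  · subst h2
    right
    have : b 2 = 2 := by rw [hb 2 (by norm_num)]; norm_num [ha1]
    rw [this]; exact Nat.prime_two
  rcases eq_or_ne n 3 with h3 | h3
  · subst h3
    left
    rw [hb 3 (by norm_num)]
    norm_num [a2 a ha1 ha]
  -- now n ≥ 4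
  have hn4 : 4 ≤ n := by omega
  obtain ⟨m, rfl⟩ : ∃ m, n = m + 1 := ⟨n - 1, by omega⟩
  simp only [Nat.add_sub_cancel] at hdef hb ⊢
  have hm3 : 3 ≤ m := by omega
  obtain ⟨h2a, hpr, hC⟩ := main_inv a ha1 ha m hm3
  have hapos : 0 < a m := a_pos a ha1 ha m (by omega)
  obtain ⟨p₀, hp1, hp2⟩ := hdef
  set g := Nat.gcd (m + 1) (a m) with hgdef
  have hgdvd : g ∣ m + 1 := Nat.gcd_dvd_left _ _
  have hbeq : b (m + 1) = (m + 1) / g := hb (m + 1) (by omega)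
  have hb0 : b (m + 1) ≠ 0 := by
    rw [hbeq]
    have hgle : g ≤ m + 1 := Nat.le_of_dvd (by omega) hgdvd
    have hgpos : 0 < g := Nat.gcd_pos_of_pos_left _ (by omega)
    exact Nat.ne_of_gt (Nat.div_pos hgle hgpos)
  have hfb : (b (m + 1)).factorization = (m + 1).factorization - g.factorization := by
    rw [hbeq]; exact Nat.factorization_div hgdvd
  have hfg : g.factorization = (m + 1).factorization ⊓ (a m).factorization :=
    Nat.factorization_gcd (by omega) ((by omega : a m ≠ 0))
  have hSa : ∀ p, Nat.Prime p → Sone p m ≤ (a m).factorization p := by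
    intro p hp
    exact (Nat.Prime.pow_dvd_iff_le_factorization hp ((by omega : a m ≠ 0))).mp
      ((pow_Sone_dvd_Cstock p m).trans hC)
  have hbf : ∀ p, Nat.Prime p →
      (b (m + 1)).factorization p =
        (m + 1).factorization p - min ((m + 1).factorization p) ((a m).factorization p) := by
    intro p hp
    rw [hfb, Finsupp.tsub_apply, hfg, Finsupp.inf_apply]
  have hzero : ∀ p, Nat.Prime p → p ≠ p₀ → (b (m + 1)).factorization p = 0 := by
    intro p hp hne
    rw [hbf p hp]
    by_cases hd : p ∣ (m + 1)
    · have h1 := hp1 p hp hd hne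
      have h2 := hSa p hp
      omega
    · rw [Nat.factorization_eq_zero_of_not_dvd hd]; simp
  by_cases hp₀ : Nat.Prime p₀
  · -- b ∣ p₀
    have hone : (b (m + 1)).factorization p₀ ≤ 1 := by
      rw [hbf p₀ hp₀]
      have := hSa p₀ hp₀
      omega
    have hdvd : b (m + 1) ∣ p₀ := by
      rw [← Nat.factorization_le_iff_dvd hb0 hp₀.ne_zero]
      rw [Finsupp.le_def]
      intro q
      by_cases hq : Nat.Prime q
      · rw [hp₀.factorization, Finsupp.single_apply]
        rcases eq_or_ne q p₀ with rfl | hne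
        · simp [hone]
        · rw [hzero q hq hne]; omega
      · rw [Nat.factorization_eq_zero_of_not_prime _ hq]; omega
    rcases hp₀.eq_one_or_self_of_dvd _ hdvd with h | h
    · left; exact h
    · right; rw [h]; exact hp₀
  · -- p₀ not prime: no prime divides b
    left
    rw [Nat.eq_one_iff_not_exists_prime_dvd]
    intro p hp hpd
    have hne : p ≠ p₀ := fun h => hp₀ (h ▸ hp)
    have := hzero p hp hne
    have hpos := Nat.Prime.factorization_pos_of_dvd hp hb0 hpd
    omega
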